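/- arXiv:1506.06275 — 2 statements merged into one kernel-verified Lean document; each statement's English description precedes it below -/
import Mathlib

section
/- Serializability supports early release: there exists a serializable history H (with unique writes) and a transaction T_i in H such that T_i releases some variable early in H. -/
/-!
Formal model of transactional memory (TM) histories, following Siek &
Wojciechowski, "Last-use Opacity: A Strong Safety Property for Transactional
Memory with Early Release Support".

Transactions and shared variables are indexed by natural numbers; values of
variables are natural numbers with initial value 0.
-/

namespace TM

open Classical

/-- Transactional operations: `init`, read of a variable, write of a value to
a variable, `tryCommit` and `tryAbort`. -/
inductive Op : Type
  | init : Op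
  | read : ℕ → Op
  | write : ℕ → ℕ → Op
  | tryCommit : Op
  | tryAbort : Op
  deriving DecidableEq

/-- Responses: `ok`, a value (for reads), commit `C_i`, abort `A_i`. -/
inductive Resp : Type
  | ok : Resp
  | value : ℕ → Resp
  | committed : Resp
  | aborted : Resp
  deriving DecidableEq

/-- Invocation and response events, tagged with the transaction executing them. -/
inductive Event : Type
  | inv : ℕ → Op → Event
  | res : ℕ → Resp → Event
  deriving DecidableEq

/-- The transaction executing an event. -/
def Event.txn : Event → ℕ
  | .inv t _ => t
  | .res t _ => t

/-- A history is a finite sequence of events. -/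
abbrev History := List Event

/-- `proj i H` is `H|T_i`, the subsequence of events of transaction `i`. -/
def proj (i : ℕ) (H : History) : History :=
  H.filter (fun e => e.txn == i)

/-- Transaction `i` is in `H` (`H|T_i ≠ ∅`). -/
def inTxn (H : History) (i : ℕ) : Prop := proj i H ≠ []

/-- `T_i` is committed in `H`: `H|T_i` contains `tryC_i → C_i`. -/
def committed (H : History) (i : ℕ) : Prop :=
  List.Sublist [Event.inv i Op.tryCommit, Event.res i Resp.committed] (proj i H)

/-- `T_i` is aborted in `H`: `H|T_i` contains a response `A_i`. -/
def aborted (H : History) (i : ℕ) : Prop :=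
  Event.res i Resp.aborted ∈ proj i H

/-- `T_i` is commit-pending in `H`. -/
def commitPending (H : History) (i : ℕ) : Prop :=
  Event.inv i Op.tryCommit ∈ proj i H ∧
    Event.res i Resp.committed ∉ proj i H ∧ Event.res i Resp.aborted ∉ proj i H

/-- `T_i` is live in `H`. -/
def live (H : History) (i : ℕ) : Prop :=
  inTxn H i ∧ ¬ committed H i ∧ ¬ aborted H i ∧ ¬ commitPending H i

/-- A complete operation execution by transaction `i` in `H`: the invocation
is at position `ki`, its matching response at position `kr` (no events of `i`
in between). -/
def opExec (H : History) (i ki kr : ℕ) (o : Op) (r : Resp) : Prop :=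
  ki < kr ∧ H[ki]? = some (Event.inv i o) ∧ H[kr]? = some (Event.res i r) ∧
    ∀ (m : ℕ) (e : Event), ki < m → m < kr → H[m]? = some e → e.txn ≠ i

def isInvEvent : Event → Prop
  | .inv _ _ => True
  | .res _ _ => False

def isResEvent : Event → Prop
  | .inv _ _ => False
  | .res _ _ => True

/-- Well-formedness of `H|T_i` (as the list `L`): alternation of invocations
and responses starting with `init_i`, no events after a commit/abort response,
and no invocation after an invocation of `tryC_i` or `tryA_i`. -/
def wellFormedTxn (L : History) (i : ℕ) : Prop :=
  (∀ (k : ℕ) (e : Event), L[k]? = some e →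
      ((k % 2 = 0 → isInvEvent e) ∧ (k % 2 = 1 → isResEvent e))) ∧
  (L ≠ [] → L[0]? = some (Event.inv i Op.init)) ∧
  (∀ k : ℕ, (L[k]? = some (Event.res i Resp.committed) ∨
      L[k]? = some (Event.res i Resp.aborted)) → L.length = k + 1) ∧
  (∀ (k : ℕ) (o : Op), L[k]? = some (Event.inv i o) → (o = Op.tryCommit ∨ o = Op.tryAbort) →
      ∀ (m : ℕ) (o' : Op), L[m]? = some (Event.inv i o') → m ≤ k)

/-- A well-formed history. -/
def wellFormed (H : History) : Prop :=
  ∀ i : ℕ, wellFormedTxn (proj i H) i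

/-- Unique writes: distinct write executions write distinct values, all
different from the initial value 0. -/
def uniqueWrites (H : History) : Prop :=
  ∀ (k1 k2 i1 i2 x1 x2 v1 v2 : ℕ),
    H[k1]? = some (Event.inv i1 (Op.write x1 v1)) →
    H[k2]? = some (Event.inv i2 (Op.write x2 v2)) →
    v1 ≠ 0 ∧ (k1 ≠ k2 → v1 ≠ v2)

/-- Two histories are equivalent if they agree on every `H|T_i`. -/
def equivH (H1 H2 : History) : Prop := ∀ i : ℕ, proj i H1 = proj i H2

/-- Real-time precedence: the last event of `H|T_i` precedes the first event
of `H|T_j` in `H`. -/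
def rtPrec (H : History) (i j : ℕ) : Prop :=
  ∃ k l : ℕ, k < l ∧
    (∃ e : Event, H[k]? = some e ∧ e.txn = i) ∧
    (∃ e : Event, H[l]? = some e ∧ e.txn = j) ∧
    (∀ (m : ℕ) (e : Event), H[m]? = some e → e.txn = i → m ≤ k) ∧
    (∀ (m : ℕ) (e : Event), H[m]? = some e → e.txn = j → l ≤ m)

/-- `S` preserves the real-time order of `H`. -/
def preservesRT (H S : History) : Prop := ∀ i j : ℕ, rtPrec H i j → rtPrec S i j

/-- A sequential history: any two distinct transactions are comparable in the
real-time order. -/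
def sequential (S : History) : Prop :=
  ∀ i j : ℕ, inTxn S i → inTxn S j → i ≠ j → rtPrec S i j ∨ rtPrec S j i

/-- The read of value `v` on variable `x` invoked at position `ki` is
consistent with the sequential specification of `x`: the latest write to `x`
completed before it writes `v`, or there is no such write and `v = 0`. -/
def readsLegally (S : History) (x v ki : ℕ) : Prop :=
  (∃ j kwi kwr : ℕ, kwr < ki ∧ opExec S j kwi kwr (Op.write x v) Resp.ok ∧
      ∀ j' v' kwi' kwr' : ℕ,
        opExec S j' kwi' kwr' (Op.write x v') Resp.ok → kwr' < ki → kwr' ≤ kwr)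
  ∨ (v = 0 ∧ ∀ j v' kwi kwr : ℕ, opExec S j kwi kwr (Op.write x v') Resp.ok → ¬ kwr < ki)

/-- A (sequential) history is legal if its restriction to every variable is in
the variable's sequential specification, i.e. every complete read is
consistent with the latest preceding write. -/
def isLegal (S : History) : Prop :=
  ∀ i x v ki kr : ℕ, opExec S i ki kr (Op.read x) (Resp.value v) → readsLegally S x v ki

/-- Transaction `i` has the pending (unanswered) invocation of `o` in `H`. -/
def pendingInv (H : History) (i : ℕ) (o : Op) : Prop :=
  (proj i H).getLast? = some (Event.inv i o)

/-- `C` is a completion `Compl(H)` of `H`. -/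
def isCompletion (H C : History) : Prop :=
  H <+: C ∧
  (∀ i : ℕ, inTxn C i → inTxn H i) ∧
  (∀ i : ℕ, inTxn C i → committed C i ∨ aborted C i) ∧
  ∀ i : ℕ, inTxn H i →
    ((committed H i ∨ aborted H i) → proj i C = proj i H) ∧
    (¬ committed H i → ¬ aborted H i →
      (pendingInv H i Op.tryCommit →
          proj i C = proj i H ++ [Event.res i Resp.committed]) ∧
      ((∃ o : Op, o ≠ Op.tryCommit ∧ pendingInv H i o) →
          proj i C = proj i H ++ [Event.res i Resp.aborted]) ∧
      ((¬ ∃ o : Op, pendingInv H i o) →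
          proj i C = proj i H ++ [Event.inv i Op.tryCommit, Event.res i Resp.aborted]))

/-- Restriction of a history to the events of a set of transactions. -/
noncomputable def restrictTxns (S : History) (T : Set ℕ) : History :=
  S.filter (fun e => decide (e.txn ∈ T))

/-- `Vis(S,T_i)`: the longest subhistory of `S` containing, for each `T_j` in
`S`, the events of `T_j` iff `j = i` or (`T_j` is committed and `T_j ≺_S T_i`). -/
noncomputable def Vis (S : History) (i : ℕ) : History :=
  restrictTxns S {j | j = i ∨ (committed S j ∧ rtPrec S j i)}

/-- `T_i` is legal in `S` if `Vis(S,T_i)` is legal. -/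
def legalIn (S : History) (i : ℕ) : Prop := isLegal (Vis S i)

/-- Serializability. -/
def serializable (H : History) : Prop :=
  ∃ C S : History, isCompletion H C ∧ sequential S ∧ equivH S C ∧
    ∀ i : ℕ, inTxn S i → committed S i → legalIn S i

/-- The read invoked at position `ki` by `T_j` on `x` is non-local: no write
to `x` by `T_j` precedes it. -/
def nonLocalReadAt (H : History) (j x ki : ℕ) : Prop :=
  ∀ m v : ℕ, m < ki → H[m]? ≠ some (Event.inv j (Op.write x v))

/-- `T_i` releases variable `x` early in `H`. -/
def releasesEarly (H : History) (i x : ℕ) : Prop :=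
  ∃ P : History, P <+: H ∧ live P i ∧
    ∃ j v wki wkr rki rkr : ℕ, j ≠ i ∧
      opExec P i wki wkr (Op.write x v) Resp.ok ∧
      opExec P j rki rkr (Op.read x) (Resp.value v) ∧
      nonLocalReadAt P j x rki ∧
      wkr < rki

/-- Overwriting by `T_i` observed by `T_j` on variable `x` in `H`. -/
def overwriting (H : History) (i j x : ℕ) : Prop :=
  i ≠ j ∧ releasesEarly H i x ∧
  ∃ v v' k1i k1r k2i k2r kri krr : ℕ,
    opExec H i k1i k1r (Op.write x v) Resp.ok ∧
    opExec H i k2i k2r (Op.write x v') Resp.ok ∧ k1r < k2i ∧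
    opExec H j kri krr (Op.read x) (Resp.value v) ∧ krr < k2i

/-- Final-state opacity. -/
def finalStateOpaque (H : History) : Prop :=
  ∃ C S : History, isCompletion H C ∧ sequential S ∧ equivH S C ∧ preservesRT H S ∧
    ∀ i : ℕ, inTxn S i → legalIn S i

/-- Opacity: every finite prefix is final-state opaque. -/
def isOpaque (H : History) : Prop := ∀ P : History, P <+: H → finalStateOpaque P

/-- Causal past of `T_i` in `H`: `T_i` together with the committed or aborted
transactions that precede `T_i` in `H`. -/
def causalPast (H : History) (i : ℕ) : Set ℕ :=
  {j | j = i ∨ ((committed H j ∨ aborted H j) ∧ rtPrec H j i)}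

/-- Virtual world consistency. -/
def VWC (H : History) : Prop :=
  (∃ S : History, sequential S ∧ equivH S (restrictTxns H {j | committed H j}) ∧
      preservesRT H S ∧ ∀ j : ℕ, inTxn S j → committed S j → legalIn S j) ∧
  (∀ i : ℕ, inTxn H i → aborted H i →
      ∃ S : History, sequential S ∧ equivH S (restrictTxns H (causalPast H i)) ∧ isLegal S)

/-! ### Live opacity -/

/-- Index `k` of `L` carries (part of) a read operation execution. -/
def isReadIdx (L : History) (k : ℕ) : Prop :=
  (∃ t x : ℕ, L[k]? = some (Event.inv t (Op.read x))) ∨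
  (1 ≤ k ∧ (∃ t x : ℕ, L[k-1]? = some (Event.inv t (Op.read x))) ∧
    ∃ (t : ℕ) (r : Resp), L[k]? = some (Event.res t r))

/-- Index `k` of `L` carries (part of) a non-local read operation execution. -/
def isNonLocalReadIdx (L : History) (k : ℕ) : Prop :=
  (∃ t x : ℕ, L[k]? = some (Event.inv t (Op.read x)) ∧
      ∀ m t' v : ℕ, m < k → L[m]? ≠ some (Event.inv t' (Op.write x v))) ∨
  (1 ≤ k ∧ (∃ (t : ℕ) (r : Resp), L[k]? = some (Event.res t r)) ∧
    ∃ t x : ℕ, L[k-1]? = some (Event.inv t (Op.read x)) ∧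
      ∀ m t' v : ℕ, m < k - 1 → L[m]? ≠ some (Event.inv t' (Op.write x v)))

/-- The subsequence of `L` of events at indices satisfying `p`. -/
noncomputable def seqOfIdx (L : History) (p : ℕ → Prop) : History :=
  ((List.range L.length).filter (fun k => decide (p k))).filterMap (fun k => L[k]?)

/-- `H|(T_i,r)`: the read operation executions of `T_i`, excluding the last
read if its response is `A_i`. -/
noncomputable def readSeq (H : History) (i : ℕ) : History :=
  let L := proj i H
  let R := seqOfIdx L (isReadIdx L)
  if R.getLast? = some (Event.res i Resp.aborted) then R.dropLast.dropLast else R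

/-- `H|(T_i,gr)`: the non-local read operation executions of `T_i`, excluding
the last read if its response is `A_i`. -/
noncomputable def grSeq (H : History) (i : ℕ) : History :=
  let L := proj i H
  let R := seqOfIdx L (isNonLocalReadIdx L)
  if R.getLast? = some (Event.res i Resp.aborted) then R.dropLast.dropLast else R

/-- The transaction `T_i^gr`. -/
noncomputable def grTxn (H : History) (i : ℕ) : History :=
  if grSeq H i = [] then []
  else [Event.inv i Op.init, Event.res i Resp.ok] ++ grSeq H i ++
       [Event.inv i Op.tryCommit, Event.res i Resp.committed]

/-- `S` justifies the serializability of `H`. -/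
def justifiesSer (S H : History) : Prop :=
  ∃ H' : History, List.Sublist H' H ∧ (∀ e ∈ H', committed H e.txn) ∧
    (∀ j : ℕ, committed H j → proj j H' = proj j H) ∧
    isLegal S ∧ equivH S H'

/-- All complete local reads of `T_i` in `H` have legal responses: the last
preceding write of `T_i` to the variable wrote the value read. -/
def localReadsLegal (H : History) (i : ℕ) : Prop :=
  ∀ x v ki kr : ℕ, opExec (proj i H) i ki kr (Op.read x) (Resp.value v) →
    (∃ m w : ℕ, m < ki ∧ (proj i H)[m]? = some (Event.inv i (Op.write x w))) →
    ∃ m : ℕ, m < ki ∧ (proj i H)[m]? = some (Event.inv i (Op.write x v)) ∧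
      ∀ m' w' : ℕ, m < m' → m' < ki → (proj i H)[m']? ≠ some (Event.inv i (Op.write x w'))

/-- Live opacity. -/
def liveOpaque (H : History) : Prop :=
  ∃ S : History, sequential S ∧ preservesRT H S ∧ justifiesSer S H ∧
    (∃ S' : History, sequential S' ∧ List.Sublist S S' ∧
      (∀ i : ℕ, inTxn H i → ¬ inTxn S i → proj i S' = grTxn H i) ∧
      (∀ i j : ℕ, rtPrec H i j → inTxn S' i → inTxn S' j → rtPrec S' i j) ∧
      isLegal S') ∧
    (∀ i : ℕ, inTxn H i → ¬ inTxn S i → localReadsLegal H i)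

/-! ### Last-use opacity -/

/-- A prefix-closed set of histories (the possible histories of a program). -/
def prefixClosed (E : Set History) : Prop :=
  ∀ H ∈ E, ∀ P : History, P <+: H → P ∈ E

/-- The write execution on `x` by `T_i` at positions `(ki,kr)` is the closing
("last") write on `x` by `T_i` in `H` with respect to the possible histories
`E`: in no extension of `H` in `E` does `T_i` invoke another write on `x`
after it. -/
def closingWrite (E : Set History) (H : History) (i x v ki kr : ℕ) : Prop :=
  opExec H i ki kr (Op.write x v) Resp.ok ∧
  ∀ H' ∈ E, H <+: H' → ∀ m v' : ℕ, H'[m]? = some (Event.inv i (Op.write x v')) → m ≤ ki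

/-- `T_i` decided on `x` in `H` (w.r.t. `E`). -/
def decidedOn (E : Set History) (H : History) (i x : ℕ) : Prop :=
  ∃ v ki kr : ℕ, closingWrite E H i x v ki kr

/-- The variable accessed by an operation. -/
def opVar : Op → Option ℕ
  | .read x => some x
  | .write x _ => some x
  | _ => none

/-- The variable accessed by the event at index `k` of `L` (for a response,
the variable of the matching invocation at `k-1`). -/
def eventVarAt (L : History) (k : ℕ) : Option ℕ :=
  match L[k]? with
  | some (Event.inv _ o) => opVar o
  | some (Event.res _ _) =>
      match L[k-1]? with
      | some (Event.inv _ o) => opVar o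
      | _ => none
  | none => none

/-- The operation execution starting at index `k` of `L` is complete. -/
def completeAt (L : History) (k : ℕ) : Prop :=
  ∀ (t : ℕ) (o : Op), L[k]? = some (Event.inv t o) →
    ∃ (t' : ℕ) (r : Resp), L[k+1]? = some (Event.res t' r)

/-- `Hs⌊T_i` (decided transaction subhistory): the subsequence of `Hs|T_i`
consisting of `init_i` and all complete operation executions on variables on
which `T_i` decided (decidedness judged in `Hd` w.r.t. `E`). -/
noncomputable def lastUseProj (E : Set History) (Hd Hs : History) (i : ℕ) : History :=
  let L := proj i Hs
  seqOfIdx L (fun k => completeAt L k ∧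
    (k ≤ 1 ∨ ∃ x : ℕ, eventVarAt L k = some x ∧ decidedOn E Hd i x))

/-- `Hs⌊^T_i = Hs⌊T_i · [tryC_i → C_i]`. -/
noncomputable def lastUseProjC (E : Set History) (Hd Hs : History) (i : ℕ) : History :=
  lastUseProj E Hd Hs i ++ [Event.inv i Op.tryCommit, Event.res i Resp.committed]

/-- Transactions of a history in order of first occurrence. -/
def txnOrder : History → List ℕ
  | [] => []
  | e :: t => e.txn :: (txnOrder t).filter (fun j => j ≠ e.txn)

/-- The candidate `LUVis(S,T_i)` determined by a choice `inc` of which decided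
non-committed transactions to include: for each transaction `j` of `S` in
order, all of `S|T_j` if `j = i` or `T_j` is committed in `S` and `T_j ≺_S T_i`;
`S⌊^T_j` if `T_j` is non-committed, decided on some variable in `H`,
`T_j ≺_S T_i`, not `T_j ≺_H T_i`, and `inc j` holds; nothing otherwise. -/
noncomputable def buildLUVis (E : Set History) (H S : History) (i : ℕ)
    (inc : ℕ → Prop) : History :=
  (txnOrder S).flatMap (fun j =>
    if j = i ∨ (committed S j ∧ rtPrec S j i) then proj j S
    else if ¬ committed S j ∧ (∃ x : ℕ, decidedOn E H j x) ∧ rtPrec S j i ∧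
        ¬ rtPrec H j i ∧ inc j
      then lastUseProjC E H S j
    else [])

/-- `T_i` is last-use legal in `S`: some admissible `LUVis(S,T_i)` is legal. -/
def lastUseLegal (E : Set History) (H S : History) (i : ℕ) : Prop :=
  ∃ inc : ℕ → Prop, isLegal (buildLUVis E H S i inc)

/-- Final-state last-use opacity with respect to `E`. -/
def finalStateLUOpaque (E : Set History) (H : History) : Prop :=
  ∃ C S : History, isCompletion H C ∧ sequential S ∧ equivH S C ∧ preservesRT H S ∧
    (∀ i : ℕ, inTxn S i → committed S i → legalIn S i) ∧
    (∀ i : ℕ, inTxn S i → ¬ committed S i → lastUseLegal E H S i)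

/-- Last-use opacity with respect to `E`: every finite prefix is final-state
last-use opaque with respect to `E`. -/
def lastUseOpaque (E : Set History) (H : History) : Prop :=
  ∀ P : History, P <+: H → finalStateLUOpaque E P

/-! ### Database conditions -/

/-- `T_j` reads from `T_i` in `H` (unique writes). -/
def readsFrom (H : History) (j i : ℕ) : Prop :=
  ∃ x v kwi kwr kri krr : ℕ,
    opExec H i kwi kwr (Op.write x v) Resp.ok ∧
    opExec H j kri krr (Op.read x) (Resp.value v)

/-- Recoverability: if `T_j` reads from `T_i` then `T_i` commits before `T_j`
commits. -/
def recoverable (H : History) : Prop :=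
  ∀ i j : ℕ, i ≠ j → readsFrom H j i →
    ∀ kc' : ℕ, H[kc']? = some (Event.res j Resp.committed) →
      ∃ kc : ℕ, kc < kc' ∧ H[kc]? = some (Event.res i Resp.committed)

/-- Avoiding cascading aborts: whenever `T_j` reads `x` from `T_i`, the commit
response `C_i` precedes the read. -/
def ACA (H : History) : Prop :=
  ∀ i j x v kwi kwr kri krr : ℕ, i ≠ j →
    opExec H i kwi kwr (Op.write x v) Resp.ok →
    opExec H j kri krr (Op.read x) (Resp.value v) →
    ∃ m : ℕ, m < kri ∧ H[m]? = some (Event.res i Resp.committed)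

/-- Strictness. -/
def strictH (H : History) : Prop :=
  ∀ i j : ℕ, i ≠ j → ∀ x v v' ki kr kwi kwr : ℕ,
    (opExec H i ki kr (Op.read x) (Resp.value v) ∨ opExec H i ki kr (Op.write x v') Resp.ok) →
    opExec H j kwi kwr (Op.write x v) Resp.ok →
    kwr < ki →
    ∃ m : ℕ, m < ki ∧
      (H[m]? = some (Event.res j Resp.committed) ∨ H[m]? = some (Event.res j Resp.aborted))

end TM

namespace TM

/-!
Let `T₁` write `1` to `x` and, while `T₁` is still live, let `T₂` read that value; afterwards
both commit. Then `T₁` releases `x` early. Serializability ignores the real-time order and only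
asks that committed transactions be legal in some sequential history equivalent to a completion:
running all of `T₁` before all of `T₂` is such a history, and there `T₂`'s read sees `T₁`'s write.
-/

theorem opExec_of_adjacent {H : History} {i k : ℕ} {o : Op} {r : Resp}
    (hi : H[k]? = some (.inv i o)) (hr : H[k + 1]? = some (.res i r)) :
    opExec H i k (k + 1) o r :=
  ⟨k.lt_succ_self, hi, hr, fun _ _ h₁ h₂ _ => absurd h₂ (by omega)⟩

theorem opExec.resp_index_eq {H : History} {i ki kr kr' : ℕ} {o o' : Op} {r r' : Resp}
    (h : opExec H i ki kr o r) (h' : opExec H i ki kr' o' r') : kr = kr' := by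
  rcases lt_trichotomy kr kr' with hlt | heq | hgt
  · exact absurd rfl (h'.2.2.2 kr _ h.1 hlt h.2.2.1)
  · exact heq
  · exact absurd rfl (h.2.2.2 kr' _ h'.1 hgt h'.2.2.1)

theorem readsLegally_of_unique_write {S : History} {j x v kwi kwr ki : ℕ}
    (hw : opExec S j kwi kwr (.write x v) .ok) (hlt : kwr < ki)
    (huniq : ∀ m j' v', m < ki → S[m]? = some (.inv j' (.write x v')) → m = kwi) :
    readsLegally S x v ki := by
  refine Or.inl ⟨j, kwi, kwr, hlt, hw, fun j' v' kwi' kwr' hw' hlt' => ?_⟩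
  obtain rfl : kwi' = kwi := huniq _ _ _ (hw'.1.trans hlt') hw'.2.1
  obtain rfl : j' = j := (Event.inv.inj (Option.some.inj (hw'.2.1.symm.trans hw.2.1))).1
  exact (hw'.resp_index_eq hw).le

theorem isLegal_of_forall_not_mem_read {S : History} (h : ∀ i x, .inv i (.read x) ∉ S) :
    isLegal S :=
  fun i x _ _ _ hr => absurd (List.mem_of_getElem? hr.2.1) (h i x)

theorem rtPrec_append {A B : History} {i j : ℕ} (hij : i ≠ j)
    (hA : ∀ e ∈ A, e.txn = i) (hB : ∀ e ∈ B, e.txn = j) (hA₀ : A ≠ []) (hB₀ : B ≠ []) :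
    rtPrec (A ++ B) i j := by
  have hpos : 0 < A.length := List.length_pos_iff.2 hA₀
  have hleft {m e} (hm : (A ++ B)[m]? = some e) (hmA : m < A.length) : e ∈ A := by
    rw [List.getElem?_append_left hmA] at hm
    exact List.mem_of_getElem? hm
  have hright {m e} (hm : (A ++ B)[m]? = some e) (hmA : A.length ≤ m) : e ∈ B := by
    rw [List.getElem?_append_right hmA] at hm
    exact List.mem_of_getElem? hm
  refine ⟨A.length - 1, A.length, by omega, ?_, ?_, ?_, ?_⟩
  · refine ⟨A[A.length - 1], ?_, hA _ (List.getElem_mem _)⟩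
    rw [List.getElem?_append_left (by omega), List.getElem?_eq_getElem]
  · refine ⟨B[0]'(List.length_pos_iff.2 hB₀), ?_, hB _ (List.getElem_mem _)⟩
    rw [List.getElem?_append_right le_rfl, Nat.sub_self, List.getElem?_eq_getElem]
  · intro m e hm he
    by_contra! hmA
    exact hij (he ▸ hB e (hright hm (by omega)))
  · intro m e hm he
    by_contra! hmA
    exact hij (he ▸ hA e (hleft hm hmA)).symm

theorem rtPrec_asymm {S : History} {i j : ℕ} (h : rtPrec S i j) : ¬ rtPrec S j i := by
  obtain ⟨k, l, hkl, -, -, hk, hl⟩ := h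
  rintro ⟨k', l', hkl', ⟨e, he, hej⟩, ⟨f, hf, hfi⟩, -, -⟩
  have := hl k' e he hej
  have := hk l' f hf hfi
  omega

theorem isCompletion_self {H : History} (h : ∀ i, inTxn H i → committed H i ∨ aborted H i) :
    isCompletion H H :=
  ⟨List.prefix_refl H, fun _ hi => hi, h,
    fun i hi => ⟨fun _ => rfl, fun hc ha => ((h i hi).elim hc ha).elim⟩⟩

theorem proj_append (i : ℕ) (A B : History) : proj i (A ++ B) = proj i A ++ proj i B :=
  List.filter_append A B

theorem wellFormedTxn_nil (i : ℕ) : wellFormedTxn [] i := by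
  refine ⟨?_, ?_, ?_, ?_⟩ <;> simp

theorem exists_mem_txn_of_inTxn {H : History} {i : ℕ} (h : inTxn H i) : ∃ e ∈ H, e.txn = i := by
  obtain ⟨e, he⟩ := List.exists_mem_of_ne_nil _ h
  simp only [proj, List.mem_filter, beq_iff_eq] at he
  exact ⟨e, he⟩

theorem inTxn_of_mem {H : History} {e : Event} (he : e ∈ H) : inTxn H e.txn :=
  List.ne_nil_of_mem (List.mem_filter.2 ⟨he, beq_self_eq_true _⟩)

def committedRun (i : ℕ) (o : Op) (r : Resp) : History :=
  [.inv i .init, .res i .ok, .inv i o, .res i r, .inv i .tryCommit, .res i .committed]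

theorem proj_committedRun (i j : ℕ) (o : Op) (r : Resp) :
    proj i (committedRun j o r) = if j = i then committedRun j o r else [] := by
  split_ifs with h
  · subst h; simp [proj, committedRun, Event.txn]
  · simp [proj, committedRun, Event.txn, h]

theorem wellFormedTxn_committedRun (i : ℕ) {o : Op} {r : Resp}
    (ho₁ : o ≠ .tryCommit) (ho₂ : o ≠ .tryAbort) (hr₁ : r ≠ .committed) (hr₂ : r ≠ .aborted) :
    wellFormedTxn (committedRun i o r) i := by
  refine ⟨fun k e h => ?_, fun _ => rfl, fun k h => ?_, fun k o' h ho' m o'' hm => ?_⟩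
  · obtain ⟨hk, rfl⟩ := List.getElem?_eq_some_iff.1 h
    change k < 6 at hk
    interval_cases k <;> simp [committedRun, isInvEvent, isResEvent]
  · have hk : k < 6 := by rcases h with h | h <;> exact (List.getElem?_eq_some_iff.1 h).1
    interval_cases k <;> simp_all [committedRun]
  · have hk : k < 6 := (List.getElem?_eq_some_iff.1 h).1
    have hm' : m < 6 := (List.getElem?_eq_some_iff.1 hm).1
    rcases ho' with rfl | rfl <;> interval_cases k <;> interval_cases m <;> simp_all [committedRun]

def earlyReleasePrefix : History :=
  [.inv 1 .init, .res 1 .ok, .inv 1 (.write 0 1), .res 1 .ok,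
   .inv 2 .init, .res 2 .ok, .inv 2 (.read 0), .res 2 (.value 1)]

def earlyReleaseHist : History :=
  earlyReleasePrefix ++ [.inv 1 .tryCommit, .res 1 .committed, .inv 2 .tryCommit, .res 2 .committed]

def earlyReleaseSerial : History :=
  committedRun 1 (.write 0 1) .ok ++ committedRun 2 (.read 0) (.value 1)

theorem proj_earlyReleaseHist (i : ℕ) : proj i earlyReleaseHist = proj i earlyReleaseSerial := by
  rcases eq_or_ne i 1 with rfl | h₁
  · decide
  rcases eq_or_ne i 2 with rfl | h₂
  · decide
  simp [proj, earlyReleaseHist, earlyReleasePrefix, earlyReleaseSerial, committedRun, Event.txn,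
    h₁.symm, h₂.symm]

theorem eq_one_or_eq_two_of_inTxn_earlyReleaseSerial {i : ℕ} (hi : inTxn earlyReleaseSerial i) :
    i = 1 ∨ i = 2 := by
  obtain ⟨e, he, rfl⟩ := exists_mem_txn_of_inTxn hi
  simp only [earlyReleaseSerial, committedRun, List.cons_append, List.nil_append,
    List.mem_cons, List.not_mem_nil, or_false] at he
  rcases he with rfl | rfl | rfl | rfl | rfl | rfl | rfl | rfl | rfl | rfl | rfl | rfl <;>
    simp [Event.txn]

theorem committed_earlyReleaseSerial {i : ℕ} (hi : inTxn earlyReleaseSerial i) :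
    committed earlyReleaseSerial i := by
  rcases eq_one_or_eq_two_of_inTxn_earlyReleaseSerial hi with rfl | rfl <;>
    unfold committed <;> decide

theorem rtPrec_earlyReleaseSerial : rtPrec earlyReleaseSerial 1 2 :=
  rtPrec_append (by decide) (by simp [committedRun, Event.txn]) (by simp [committedRun, Event.txn])
    (by simp [committedRun]) (by simp [committedRun])

theorem sequential_earlyReleaseSerial : sequential earlyReleaseSerial := by
  intro i j hi hj hij
  rcases eq_one_or_eq_two_of_inTxn_earlyReleaseSerial hi with rfl | rfl <;>
    rcases eq_one_or_eq_two_of_inTxn_earlyReleaseSerial hj with rfl | rfl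
  · exact absurd rfl hij
  · exact .inl rtPrec_earlyReleaseSerial
  · exact .inr rtPrec_earlyReleaseSerial
  · exact absurd rfl hij

theorem Vis_earlyReleaseSerial_one : Vis earlyReleaseSerial 1 = committedRun 1 (.write 0 1) .ok := by
  have h₂₁ : ¬ rtPrec earlyReleaseSerial 2 1 := rtPrec_asymm rtPrec_earlyReleaseSerial
  unfold Vis restrictTxns
  conv_lhs => arg 2; unfold earlyReleaseSerial
  simp [committedRun, Event.txn, h₂₁]

theorem Vis_earlyReleaseSerial_two : Vis earlyReleaseSerial 2 = earlyReleaseSerial := by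
  refine List.filter_eq_self.2 fun e he => ?_
  have h₁ : inTxn earlyReleaseSerial 1 := by unfold inTxn; decide
  rcases eq_one_or_eq_two_of_inTxn_earlyReleaseSerial (inTxn_of_mem he) with h | h <;>
    simp [h, committed_earlyReleaseSerial h₁, rtPrec_earlyReleaseSerial]

theorem eq_two_of_write_earlyReleaseSerial {m j x v : ℕ}
    (h : earlyReleaseSerial[m]? = some (.inv j (.write x v))) : m = 2 := by
  have hm := (List.getElem?_eq_some_iff.1 h).1
  simp only [earlyReleaseSerial, committedRun, List.length_append, List.length_cons,
    List.length_nil] at hm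
  interval_cases m <;> simp [earlyReleaseSerial, committedRun] at h ⊢

theorem eq_eight_of_read_earlyReleaseSerial {k i x : ℕ}
    (h : earlyReleaseSerial[k]? = some (.inv i (.read x))) : k = 8 := by
  have hk := (List.getElem?_eq_some_iff.1 h).1
  simp only [earlyReleaseSerial, committedRun, List.length_append, List.length_cons,
    List.length_nil] at hk
  interval_cases k <;> simp [earlyReleaseSerial, committedRun] at h ⊢

theorem isLegal_earlyReleaseSerial : isLegal earlyReleaseSerial := by
  intro i x v ki kr hr
  obtain rfl := eq_eight_of_read_earlyReleaseSerial hr.2.1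
  obtain ⟨-, rfl⟩ : i = 2 ∧ x = 0 := by
    simpa [earlyReleaseSerial, committedRun] using List.mem_of_getElem? hr.2.1
  obtain ⟨-, rfl⟩ : i = 2 ∧ v = 1 := by
    simpa [earlyReleaseSerial, committedRun] using List.mem_of_getElem? hr.2.2.1
  exact readsLegally_of_unique_write (kwi := 2) (opExec_of_adjacent rfl rfl) (by omega)
    fun _ _ _ _ h => eq_two_of_write_earlyReleaseSerial h

theorem serializable_earlyReleaseHist : serializable earlyReleaseHist := by
  refine ⟨earlyReleaseHist, earlyReleaseSerial, isCompletion_self fun i hi => .inl ?_,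
    sequential_earlyReleaseSerial, fun i => (proj_earlyReleaseHist i).symm, fun i hi _ => ?_⟩
  · rw [inTxn, proj_earlyReleaseHist] at hi
    rw [committed, proj_earlyReleaseHist]
    exact committed_earlyReleaseSerial hi
  · rcases eq_one_or_eq_two_of_inTxn_earlyReleaseSerial hi with rfl | rfl <;> rw [legalIn]
    · rw [Vis_earlyReleaseSerial_one]
      exact isLegal_of_forall_not_mem_read (by simp [committedRun])
    · rw [Vis_earlyReleaseSerial_two]
      exact isLegal_earlyReleaseSerial

theorem wellFormed_earlyReleaseHist : wellFormed earlyReleaseHist := by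
  intro i
  rw [proj_earlyReleaseHist, earlyReleaseSerial, proj_append, proj_committedRun, proj_committedRun]
  rcases eq_or_ne i 1 with rfl | h₁
  · simpa using wellFormedTxn_committedRun 1 (o := .write 0 1) (r := .ok) nofun nofun nofun nofun
  rcases eq_or_ne i 2 with rfl | h₂
  · simpa using wellFormedTxn_committedRun 2 (o := .read 0) (r := .value 1) nofun nofun nofun nofun
  simpa [h₁.symm, h₂.symm] using wellFormedTxn_nil i

theorem uniqueWrites_earlyReleaseHist : uniqueWrites earlyReleaseHist := by
  have hwrite {k i x v : ℕ} (h : earlyReleaseHist[k]? = some (.inv i (.write x v))) :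
      k = 2 ∧ v = 1 := by
    obtain ⟨-, -, rfl⟩ : i = 1 ∧ x = 0 ∧ v = 1 := by
      simpa [earlyReleaseHist, earlyReleasePrefix] using List.mem_of_getElem? h
    have hk := (List.getElem?_eq_some_iff.1 h).1
    simp only [earlyReleaseHist, earlyReleasePrefix, List.cons_append, List.nil_append,
      List.length_cons, List.length_nil] at hk
    interval_cases k <;> simp [earlyReleaseHist, earlyReleasePrefix] at h ⊢
  intro k₁ k₂ _ _ _ _ v₁ v₂ h₁ h₂
  obtain ⟨rfl, rfl⟩ := hwrite h₁
  obtain ⟨rfl, rfl⟩ := hwrite h₂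
  exact ⟨one_ne_zero, fun h => absurd rfl h⟩

theorem releasesEarly_earlyReleaseHist : releasesEarly earlyReleaseHist 1 0 := by
  refine ⟨earlyReleasePrefix, ⟨_, rfl⟩, by unfold live inTxn committed aborted commitPending; decide,
    2, 1, 2, 3, 6, 7, by decide, opExec_of_adjacent rfl rfl, opExec_of_adjacent rfl rfl, ?_, by omega⟩
  intro m v hm h
  interval_cases m <;> simp [earlyReleasePrefix] at h

/-- Serializability supports early release: there exists a
serializable (well-formed, unique-writes) history `H` and a transaction `T_i`
in `H` that releases some variable early in `H`. -/
theorem serializability_supports_early_release :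
    ∃ (H : History) (i x : ℕ),
      wellFormed H ∧ uniqueWrites H ∧ serializable H ∧
      inTxn H i ∧ releasesEarly H i x :=
  ⟨earlyReleaseHist, 1, 0, wellFormed_earlyReleaseHist, uniqueWrites_earlyReleaseHist,
    serializable_earlyReleaseHist, by unfold inTxn; decide, releasesEarly_earlyReleaseHist⟩

end TM
end

section
/- Opacity does not support early release: in every opaque history H (with unique writes), no transaction releases any variable early in H. -/
/-!
In a prefix `P` where the writer `T_i` is still live, every completion aborts `T_i`, so in a
sequential witness `S` of final-state opacity `T_i` is not committed and hence not in
`Vis(S,T_j)`. The read `r_j(x) → v` survives into `Vis(S,T_j)`, but by unique writes `T_i` is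
the only transaction writing `v`, and `v ≠ 0`: the read is illegal there.
-/

namespace List

variable {α : Type*}

theorem IsPrefix.getElem?_eq_some {l₁ l₂ : List α} (h : l₁ <+: l₂) {n : ℕ} {a : α}
    (hn : l₁[n]? = some a) : l₂[n]? = some a := by
  obtain ⟨t, rfl⟩ := h
  rw [getElem?_append_left (getElem?_eq_some_iff.mp hn).1, hn]

theorem drop_eq_cons_of_getElem?_eq_some {l : List α} {k : ℕ} {a : α} (h : l[k]? = some a) :
    l.drop k = a :: l.drop (k + 1) := by
  obtain ⟨hk, rfl⟩ := getElem?_eq_some_iff.mp h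
  exact drop_eq_getElem_cons hk

theorem getElem?_append_cons_length_add {l₁ l₂ : List α} {a : α} {n : ℕ} :
    (l₁ ++ a :: l₂)[l₁.length + 1 + n]? = l₂[n]? := by
  rw [getElem?_append_right (by omega), show l₁.length + 1 + n - l₁.length = n + 1 by omega,
    getElem?_cons_succ]

theorem pair_infix_filter_iff {p : α → Bool} {l : List α} {a b : α} (ha : p a) (hb : p b) :
    [a, b] <:+: l.filter p ↔
      ∃ l₁ l₂ l₃, l = l₁ ++ a :: (l₂ ++ b :: l₃) ∧ ∀ e ∈ l₂, p e = false := by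
  constructor
  · rintro ⟨s, t, h⟩
    obtain ⟨l₁, r, rfl, -, hr⟩ := filter_eq_append_iff.mp (h.symm.trans (by simp) :
      l.filter p = s ++ a :: b :: t)
    obtain ⟨l₁', r', rfl, -, -, hr'⟩ := filter_eq_cons_iff.mp hr
    obtain ⟨l₂, l₃, rfl, hl₂, -, -⟩ := filter_eq_cons_iff.mp hr'
    exact ⟨l₁ ++ l₁', l₂, l₃, by simp, by simpa using hl₂⟩
  · rintro ⟨l₁, l₂, l₃, rfl, hl₂⟩
    refine ⟨l₁.filter p, l₃.filter p, ?_⟩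
    simp [filter_append, ha, hb, filter_eq_nil_iff.mpr (by simpa using hl₂)]

theorem pair_sublist_of_sublist_append {l m : List α} {a b : α} (h : [a, b] <+ l ++ m)
    (hb : b ∉ m) : [a, b] <+ l := by
  obtain ⟨l₁, l₂, heq, h₁, h₂⟩ := sublist_append_iff.mp h
  rcases l₂.eq_nil_or_concat with rfl | ⟨l₂', c, rfl⟩
  · simpa [heq] using h₁
  · have hc : c = b := by simpa using congrArg getLast? heq.symm
    exact absurd (h₂.subset (by simp [hc])) hb

end List

namespace TM

theorem mem_proj {L : History} {t : ℕ} {e : Event} : e ∈ proj t L ↔ e ∈ L ∧ e.txn = t := by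
  simp [proj]

theorem exists_opExec_iff_eq_append {L : History} {t : ℕ} {o : Op} {r : Resp} :
    (∃ ki kr, opExec L t ki kr o r) ↔
      ∃ l₁ l₂ l₃, L = l₁ ++ Event.inv t o :: (l₂ ++ Event.res t r :: l₃) ∧
        ∀ e ∈ l₂, e.txn ≠ t := by
  constructor
  · rintro ⟨ki, kr, hlt, hi, hr, hmid⟩
    refine ⟨L.take ki, (L.drop (ki + 1)).take (kr - ki - 1), L.drop (kr + 1), ?_, ?_⟩
    · conv_lhs => rw [← List.take_append_drop ki L, List.drop_eq_cons_of_getElem?_eq_some hi,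
        ← List.take_append_drop (kr - ki - 1) (L.drop (ki + 1)), List.drop_drop,
        show ki + 1 + (kr - ki - 1) = kr by omega, List.drop_eq_cons_of_getElem?_eq_some hr]
    · intro e he
      obtain ⟨m, hm⟩ := List.getElem?_of_mem he
      have hm' : m < kr - ki - 1 := by
        have := (List.getElem?_eq_some_iff.mp hm).1
        simp only [List.length_take, List.length_drop] at this
        omega
      rw [List.getElem?_take_of_lt hm', List.getElem?_drop] at hm
      exact hmid _ e (by omega) (by omega) hm
  · rintro ⟨l₁, l₂, l₃, rfl, hl₂⟩
    refine ⟨l₁.length, l₁.length + 1 + l₂.length, by omega, by simp, ?_, ?_⟩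
    · rw [List.getElem?_append_cons_length_add]
      simp
    · intro m e h₁ h₂ he
      obtain ⟨n, rfl⟩ : ∃ n, m = l₁.length + 1 + n := ⟨m - l₁.length - 1, by omega⟩
      rw [List.getElem?_append_cons_length_add, List.getElem?_append_left (by omega)] at he
      exact hl₂ e (List.mem_of_getElem? he)

theorem exists_opExec_iff_infix_proj {L : History} {t : ℕ} {o : Op} {r : Resp} :
    (∃ ki kr, opExec L t ki kr o r) ↔ [Event.inv t o, Event.res t r] <:+: proj t L := by
  rw [exists_opExec_iff_eq_append, proj,
    List.pair_infix_filter_iff (by simp [Event.txn]) (by simp [Event.txn])]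
  simp

theorem wellFormedTxn.of_prefix {L L' : History} {i : ℕ} (h : wellFormedTxn L i)
    (hp : L' <+: L) : wellFormedTxn L' i := by
  obtain ⟨halt, hinit, hlast, hend⟩ := h
  refine ⟨fun k e he => halt k e (hp.getElem?_eq_some he), fun hne => ?_,
    fun k hk => ?_, fun k o ho hterm m o' ho' =>
      hend k o (hp.getElem?_eq_some ho) hterm m o' (hp.getElem?_eq_some ho')⟩
  · obtain ⟨a, t, rfl⟩ := List.exists_cons_of_ne_nil hne
    have ha := hp.getElem?_eq_some (n := 0) (a := a) rfl
    rw [hinit (hp.ne_nil hne)] at ha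
    simpa using ha.symm
  · have hlen := hlast k (hk.imp hp.getElem?_eq_some hp.getElem?_eq_some)
    have hk' : k < L'.length := by
      rcases hk with hk | hk <;> exact (List.getElem?_eq_some_iff.mp hk).1
    have := hp.length_le
    omega

theorem wellFormed.of_prefix {H P : History} (h : wellFormed H) (hp : P <+: H) :
    wellFormed P :=
  fun i => (h i).of_prefix (hp.filter _)

theorem commitPending_of_pendingInv_tryCommit {P : History} {i : ℕ}
    (hwf : wellFormedTxn (proj i P) i) (hp : pendingInv P i Op.tryCommit)
    (ha : ¬ aborted P i) : commitPending P i := by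
  refine ⟨List.mem_of_getLast? hp, fun hC => ?_, ha⟩
  obtain ⟨k, hk⟩ := List.getElem?_of_mem hC
  rw [pendingInv, List.getLast?_eq_getElem?, hwf.2.2.1 k (Or.inl hk), Nat.add_sub_cancel,
    hk] at hp
  simp at hp

theorem isCompletion.proj_cases {P C : History} (hC : isCompletion P C) {t : ℕ}
    (ht : inTxn P t) :
    proj t C = proj t P ∨
      (pendingInv P t Op.tryCommit ∧ ¬ aborted P t ∧
        proj t C = proj t P ++ [Event.res t Resp.committed]) ∨
      proj t C = proj t P ++ [Event.res t Resp.aborted] ∨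
      proj t C = proj t P ++ [Event.inv t Op.tryCommit, Event.res t Resp.aborted] := by
  obtain ⟨hdone, hopen⟩ := hC.2.2.2 t ht
  by_cases hca : committed P t ∨ aborted P t
  · exact Or.inl (hdone hca)
  push Not at hca
  obtain ⟨hpc, hpo, hnp⟩ := hopen hca.1 hca.2
  by_cases hp : ∃ o, pendingInv P t o
  · obtain ⟨o, ho⟩ := hp
    by_cases hoc : o = Op.tryCommit
    · subst hoc
      exact Or.inr (Or.inl ⟨ho, hca.2, hpc ho⟩)
    · exact Or.inr (Or.inr (Or.inl (hpo ⟨o, hoc, ho⟩)))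
  · exact Or.inr (Or.inr (Or.inr (hnp hp)))

theorem isCompletion.mem_of_mem {P C : History} (hC : isCompletion P C) {t : ℕ} {o : Op}
    (he : Event.inv t o ∈ C) (ho : o ≠ Op.tryCommit) : Event.inv t o ∈ P := by
  have heC : Event.inv t o ∈ proj t C := mem_proj.2 ⟨he, rfl⟩
  suffices Event.inv t o ∈ proj t P from (mem_proj.1 this).1
  rcases hC.proj_cases (hC.2.1 t (List.ne_nil_of_mem heC)) with h | ⟨-, -, h⟩ | h | h <;>
    rw [h] at heC <;> simpa [ho] using heC

theorem not_committed_of_isCompletion_of_live {P C : History} {i : ℕ} (hwf : wellFormed P)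
    (hC : isCompletion P C) (hlive : live P i) : ¬ committed C i := by
  obtain ⟨hin, hnc, hna, hncp⟩ := hlive
  intro hcomm
  rcases hC.proj_cases hin with h | ⟨hp, -, -⟩ | h | h
  · rw [committed, h] at hcomm
    exact hnc hcomm
  · exact hncp (commitPending_of_pendingInv_tryCommit (hwf i) hp hna)
  all_goals
    rw [committed, h] at hcomm
    exact hnc (List.pair_sublist_of_sublist_append hcomm (by simp))

theorem equivH.mem_of_mem {S C : History} (h : equivH S C) {e : Event} (he : e ∈ S) :
    e ∈ C :=
  (mem_proj.1 (h e.txn ▸ mem_proj.2 ⟨he, rfl⟩)).1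

theorem proj_Vis_self (S : History) (i : ℕ) : proj i (Vis S i) = proj i S := by
  simp only [Vis, restrictTxns, proj, List.filter_filter]
  congr 1
  ext e
  by_cases h : e.txn = i <;> simp [h]

theorem mem_Vis {S : History} {i : ℕ} {e : Event} :
    e ∈ Vis S i ↔ e ∈ S ∧ (e.txn = i ∨ (committed S e.txn ∧ rtPrec S e.txn i)) := by
  simp [Vis, restrictTxns]

theorem uniqueWrites.writer_eq {H : History} (hu : uniqueWrites H) {k i j x y v : ℕ}
    (hk : H[k]? = some (Event.inv i (Op.write x v)))
    (hj : Event.inv j (Op.write y v) ∈ H) : j = i := by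
  obtain ⟨n, hn⟩ := List.getElem?_of_mem hj
  by_cases hnk : n = k
  · subst hnk
    rw [hk] at hn
    cases hn
    rfl
  · exact absurd rfl ((hu n k j i y x v v hn hk).2 hnk)

/-- Opacity does not support early release: in every opaque
(well-formed, unique-writes) history `H`, no transaction releases any
variable early in `H`. -/
theorem opacity_does_not_support_early_release :
    ∀ H : History, wellFormed H → uniqueWrites H → isOpaque H →
      ∀ i x : ℕ, ¬ releasesEarly H i x := by
  rintro H hwf huw hop i x ⟨P, hP, hlive, j, v, wki, _, _, _, hji, hw, hr, -, -⟩
  obtain ⟨C, S, hC, -, hSC, -, hlegal⟩ := hop P hP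
  have hiS : ¬ committed S i := by
    rw [committed, hSC i]
    exact not_committed_of_isCompletion_of_live (hwf.of_prefix hP) hC hlive
  have hrS : [Event.inv j (Op.read x), Event.res j (Resp.value v)] <:+: proj j S := by
    rw [hSC j]
    exact (exists_opExec_iff_infix_proj.1 ⟨_, _, hr⟩).trans (hC.1.filter _).isInfix
  obtain ⟨ki, kr, hrVis⟩ := exists_opExec_iff_infix_proj.2 (proj_Vis_self S j ▸ hrS)
  have hwH : H[wki]? = some (Event.inv i (Op.write x v)) := hP.getElem?_eq_some hw.2.1
  rcases hlegal j (List.ne_nil_of_mem (hrS.subset List.mem_cons_self)) j x v ki kr hrVis with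
    ⟨w, _, _, -, hwVis, -⟩ | ⟨rfl, -⟩
  · obtain ⟨hwS, hvis⟩ := mem_Vis.1 (List.mem_of_getElem? hwVis.2.1)
    obtain rfl : w = i := huw.writer_eq hwH (hP.subset (hC.mem_of_mem (hSC.mem_of_mem hwS)
      (by simp)))
    rcases hvis with h | h
    · exact hji h.symm
    · exact hiS h.1
  · exact (huw wki wki i i x x 0 0 hwH hwH).1 rfl

end TM
end
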